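/- arXiv:1801.03189 — 7 statements merged into one kernel-verified Lean document; each statement's English description precedes it below -/
import Mathlib

section
/- Let V be a finite set partitioned as V = U ⊔ C ⊔ H, and let A be a V×V matrix with nonnegative real entries such that A(v,u) = 0 whenever v ∈ C ∪ H and u ∈ U, and A(h,c) = 0 whenever h ∈ H and c ∈ C (so A is block upper triangular for the ordering U, C, H). Assume the C×C block A_C of A is irreducible, i.e. for all v,w ∈ C there is m ≥ 1 with (A_C^m)(v,w) > 0. Suppose m : V → ℝ is a vector with nonnegative entries satisfying (A·m)_v ≤ ρ(A_C)·m_v for every v ∈ V, where ρ(A_C) is the spectral radius of A_C. If w ∈ H and there exist v ∈ C and n ≥ 1 with (A^n)(v,w) > 0, then m_w = 0. -/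
open Matrix

noncomputable def specRad {n : Type*} [Fintype n] [DecidableEq n] (M : Matrix n n ℝ) : ℝ :=
  (spectralRadius ℂ (M.map Complex.ofReal)).toReal

open Finset

/-!
On `C`, the inequality `A m ≤ ρ(A_C) m` says that `m|_C` is a `ρ(A_C)`-subinvariant vector of the
irreducible block `A_C`, up to a nonnegative outflow term. Such a vector is invariant: a strict
inequality somewhere, pushed through the entrywise positive matrix `P = ∑ k < N, A_Cᵏ` (which
commutes with `A_C`), gives a positive `q = P m|_C` with `A_C q < ρ(A_C) q` in every coordinate,
and the Collatz–Wielandt bound then yields `ρ(A_C) < ρ(A_C)`. So the outflow vanishes: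
`A v x * m x = 0` for `v ∈ C`, `x ∉ C`. Finally, zeros of `m` propagate forward along edges,
because `m z = 0` forces `(A m)_z ≤ 0`; on a path from `C` to `w ∉ C`, `m` therefore vanishes from
the first vertex outside `C` on.
-/

section CollatzWielandt

variable {n : Type*} [Fintype n] {B : Matrix n n ℝ}

theorem mulVec_apply_pos_of_pos {P : Matrix n n ℝ} (hP : ∀ i j, 0 < P i j) {y : n → ℝ}
    (hy : ∀ j, 0 ≤ y j) {j : n} (hj : 0 < y j) (i : n) : 0 < (P *ᵥ y) i :=
  (mul_pos (hP i j) hj).trans_le <|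
    single_le_sum (fun l _ => mul_nonneg (hP i l).le (hy l)) (mem_univ j)

/-- The eigenvector is compared with `z` at a coordinate maximising `‖x j‖ / z j`. -/
theorem norm_le_of_mulVec_le_of_mulVec_eq_smul (hB : ∀ i j, 0 ≤ B i j) {z : n → ℝ}
    (hz : ∀ i, 0 < z i) {t : ℝ} (hBz : ∀ i, (B *ᵥ z) i ≤ t * z i) {μ : ℂ} {x : n → ℂ}
    (hx : x ≠ 0) (hμ : B.map Complex.ofReal *ᵥ x = μ • x) : ‖μ‖ ≤ t := by
  obtain ⟨j, hj⟩ := Function.ne_iff.mp hx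
  obtain ⟨i, -, hi⟩ := exists_max_image univ (fun j => ‖x j‖ / z j) ⟨j, mem_univ j⟩
  set c := ‖x i‖ / z i
  have hxz : ∀ j, ‖x j‖ ≤ c * z j := fun j => (div_le_iff₀ (hz j)).mp (hi j (mem_univ j))
  have hc : 0 < c := (div_pos (norm_pos_iff.mpr hj) (hz j)).trans_le (hi j (mem_univ j))
  have hxi : ‖x i‖ = c * z i := (div_mul_cancel₀ _ (hz i).ne').symm
  refine le_of_mul_le_mul_right ?_ (hxi ▸ mul_pos hc (hz i))
  calc ‖μ‖ * ‖x i‖ = ‖∑ j, (B i j : ℂ) * x j‖ := by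
        have hμi := congrFun hμ i
        simp only [mulVec, dotProduct, map_apply, Pi.smul_apply, smul_eq_mul] at hμi
        rw [← norm_mul, ← hμi]
    _ ≤ ∑ j, B i j * ‖x j‖ := (norm_sum_le _ _).trans_eq <| sum_congr rfl fun j _ => by
        rw [norm_mul, Complex.norm_real, Real.norm_of_nonneg (hB i j)]
    _ ≤ ∑ j, B i j * (c * z j) := by gcongr with j; exacts [hB i j, hxz j]
    _ = c * (B *ᵥ z) i := by
        simp only [mulVec, dotProduct, mul_sum]; exact sum_congr rfl fun j _ => by ring
    _ ≤ c * (t * z i) := by gcongr; exact hBz i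
    _ = t * ‖x i‖ := by rw [hxi]; ring

variable [DecidableEq n]

theorem specRad_le_of_mulVec_le [Nonempty n] (hB : ∀ i j, 0 ≤ B i j) {z : n → ℝ}
    (hz : ∀ i, 0 < z i) {t : ℝ} (hBz : ∀ i, (B *ᵥ z) i ≤ t * z i) : specRad B ≤ t := by
  obtain ⟨i⟩ := ‹Nonempty n›
  have ht : 0 ≤ t := nonneg_of_mul_nonneg_left
    ((sum_nonneg fun j _ => mul_nonneg (hB i j) (hz j).le).trans (hBz i)) (hz i)
  refine ENNReal.toReal_le_of_le_ofReal ht <| iSup₂_le fun μ hμ => ?_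
  rw [← AlgEquiv.spectrum_eq (toLinAlgEquiv' (R := ℂ) (n := n))] at hμ
  obtain ⟨x, hx⟩ := (Module.End.hasEigenvalue_iff_mem_spectrum.mpr hμ).exists_hasEigenvector
  have hμx : B.map Complex.ofReal *ᵥ x = μ • x := by
    simpa [toLinAlgEquiv'_apply] using hx.apply_eq_smul
  rw [ENNReal.ofReal, ENNReal.coe_le_coe, ← norm_toNNReal]
  exact Real.toNNReal_mono (norm_le_of_mulVec_le_of_mulVec_eq_smul hB hz hBz hx.2 hμx)

theorem specRad_lt_of_mulVec_lt [Nonempty n] (hB : ∀ i j, 0 ≤ B i j) {q : n → ℝ}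
    (hq : ∀ i, 0 < q i) {t : ℝ} (hBq : ∀ i, (B *ᵥ q) i < t * q i) : specRad B < t := by
  obtain ⟨i₀, -, hi₀⟩ := exists_min_image univ (fun i => (t * q i - (B *ᵥ q) i) / q i)
    (univ_nonempty (α := n))
  set ε := (t * q i₀ - (B *ᵥ q) i₀) / q i₀
  have hε : 0 < ε := div_pos (sub_pos.mpr (hBq i₀)) (hq i₀)
  have hle : ∀ i, (B *ᵥ q) i ≤ (t - ε) * q i := fun i => by
    have := (le_div_iff₀ (hq i)).mp (hi₀ i (mem_univ i))
    linarith
  linarith [specRad_le_of_mulVec_le hB hq hle]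

theorem Matrix.IsIrreducible.exists_sum_pow_pos (hB : B.IsIrreducible) :
    ∃ N, ∀ i j, 0 < (∑ k ∈ range N, B ^ k) i j := by
  choose k _ hk using (isIrreducible_iff_exists_pow_pos hB.nonneg).mp hB
  refine ⟨univ.sup (fun p : n × n => k p.1 p.2) + 1, fun i j => ?_⟩
  rw [sum_apply]
  refine (hk i j).trans_le <| single_le_sum (fun l _ => pow_apply_nonneg hB.nonneg l i j) ?_
  exact mem_range.mpr <| Nat.lt_succ_of_le <| le_sup (f := fun p : n × n => k p.1 p.2)
    (mem_univ (i, j))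

theorem Matrix.IsIrreducible.mulVec_eq_of_mulVec_le_specRad (hB : B.IsIrreducible)
    {x : n → ℝ} (hx : ∀ i, 0 ≤ x i) (hBx : ∀ i, (B *ᵥ x) i ≤ specRad B * x i) (i : n) :
    (B *ᵥ x) i = specRad B * x i := by
  by_contra hne
  set y := specRad B • x - B *ᵥ x with hy_def
  have hy : ∀ j, 0 ≤ y j := fun j => sub_nonneg.mpr (hBx j)
  have hyi : 0 < y i := sub_pos.mpr ((hBx i).lt_of_ne hne)
  have hxi : 0 < x i := by
    refine (hx i).lt_of_ne fun h0 => ?_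
    have : 0 ≤ (B *ᵥ x) i := sum_nonneg fun j _ => mul_nonneg (hB.nonneg i j) (hx j)
    simp only [hy_def, Pi.sub_apply, Pi.smul_apply, smul_eq_mul, ← h0, mul_zero] at hyi
    linarith
  obtain ⟨N, hP⟩ := hB.exists_sum_pow_pos
  set P := ∑ k ∈ range N, B ^ k
  have hcomm : B * P = P * B := (Commute.sum_right _ _ _ fun k _ => Commute.self_pow B k).eq
  have hBPx : B *ᵥ (P *ᵥ x) = specRad B • (P *ᵥ x) - P *ᵥ y := by
    rw [mulVec_mulVec, hcomm, ← mulVec_mulVec, hy_def, mulVec_sub, mulVec_smul, sub_sub_cancel]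
  have : Nonempty n := ⟨i⟩
  refine lt_irrefl (specRad B) <| specRad_lt_of_mulVec_lt hB.nonneg
    (mulVec_apply_pos_of_pos hP hx hxi) fun j => ?_
  rw [hBPx, Pi.sub_apply, Pi.smul_apply, smul_eq_mul, sub_lt_self_iff]
  exact mulVec_apply_pos_of_pos hP hy hyi j

end CollatzWielandt

section Downstream

variable {V : Type*} [Fintype V] {A : Matrix V V ℝ} {m : V → ℝ}

theorem apply_mul_eq_zero_of_mulVec_apply_nonpos (hA : ∀ v w, 0 ≤ A v w) (hm : ∀ v, 0 ≤ m v)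
    {v : V} (h : (A *ᵥ m) v ≤ 0) (x : V) : A v x * m x = 0 :=
  (sum_eq_zero_iff_of_nonneg fun y _ => mul_nonneg (hA v y) (hm y)).mp
    (h.antisymm (sum_nonneg fun y _ => mul_nonneg (hA v y) (hm y))) x (mem_univ x)

variable [DecidableEq V]

theorem apply_mul_eq_zero_of_mulVec_le_specRad_submatrix {C : Set V} [DecidablePred (· ∈ C)]
    (hA : ∀ v w, 0 ≤ A v w) (hC : (A.submatrix (Subtype.val : C → V) Subtype.val).IsIrreducible)
    (hm : ∀ v, 0 ≤ m v)
    (hAm : ∀ v ∈ C, (A *ᵥ m) v ≤ specRad (A.submatrix (Subtype.val : C → V) Subtype.val) * m v)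
    {v x : V} (hv : v ∈ C) (hx : x ∉ C) : A v x * m x = 0 := by
  set B := A.submatrix (Subtype.val : C → V) Subtype.val
  have hsplit : ∀ c : C, (A *ᵥ m) c =
      (B *ᵥ (m ∘ Subtype.val)) c + ∑ y : {y // y ∉ C}, A c y * m y := fun c =>
    (Fintype.sum_subtype_add_sum_subtype (· ∈ C) _).symm
  have hout : ∀ c : C, 0 ≤ ∑ y : {y // y ∉ C}, A c y * m y := fun c =>
    sum_nonneg fun y _ => mul_nonneg (hA c y) (hm y)
  have hB := hC.mulVec_eq_of_mulVec_le_specRad (x := m ∘ Subtype.val) (fun c => hm c) fun c => by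
    simp only [Function.comp_apply]
    linarith [hAm c c.2, hsplit c, hout c]
  have hBv := hB ⟨v, hv⟩
  simp only [Function.comp_apply] at hBv
  have hzero : ∑ y : {y // y ∉ C}, A v y * m y = 0 := by
    linarith [hAm v hv, hsplit ⟨v, hv⟩, hout ⟨v, hv⟩, hBv]
  exact (sum_eq_zero_iff_of_nonneg fun (y : {y // y ∉ C}) _ => mul_nonneg (hA v y) (hm y)).mp
    hzero ⟨x, hx⟩ (mem_univ _)

theorem eq_zero_of_pow_apply_pos_of_notMem {C : Set V} (hA : ∀ v w, 0 ≤ A v w)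
    (hm : ∀ v, 0 ≤ m v) {r : ℝ} (hAm : ∀ v, (A *ᵥ m) v ≤ r * m v)
    (hleak : ∀ v ∈ C, ∀ x ∉ C, A v x * m x = 0) {v x : V} (hv : v ∈ C) (hx : x ∉ C) (k : ℕ)
    (hpath : 0 < (A ^ k) v x) : m x = 0 := by
  induction k generalizing x with
  | zero =>
    rw [pow_zero, one_apply_ne (ne_of_mem_of_not_mem hv hx)] at hpath
    exact absurd hpath (lt_irrefl 0)
  | succ k ih =>
    rw [pow_succ, mul_apply] at hpath
    obtain ⟨z, -, hz⟩ := (sum_pos_iff_of_nonneg fun z _ =>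
      mul_nonneg (pow_apply_nonneg hA k v z) (hA z x)).mp hpath
    refine (mul_eq_zero.mp ?_).resolve_left (pos_of_mul_pos_right hz
      (pow_apply_nonneg hA k v z)).ne'
    by_cases hzC : z ∈ C
    · exact hleak z hzC x hx
    · have hmz := ih hzC (pos_of_mul_pos_left hz (hA z x))
      exact apply_mul_eq_zero_of_mulVec_apply_nonpos hA hm (by simpa [hmz] using hAm z) x

end Downstream

theorem kms_vanishes_downstream_general {V : Type*} [Fintype V] [DecidableEq V]
    (C H : Set V) [DecidablePred (· ∈ C)]
    (hCH : Disjoint C H)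
    (A : Matrix V V ℝ)
    (hA : ∀ v w, 0 ≤ A v w)
    (hirr : ∀ v w : C, ∃ m : ℕ, 1 ≤ m ∧
      0 < ((A.submatrix (Subtype.val : C → V) (Subtype.val : C → V)) ^ m) v w)
    (m : V → ℝ) (hm : ∀ v, 0 ≤ m v)
    (hsub : ∀ v, A.mulVec m v ≤
      specRad (A.submatrix (Subtype.val : C → V) (Subtype.val : C → V)) * m v)
    (w : V) (hw : w ∈ H)
    (hpath : ∃ v ∈ C, ∃ n : ℕ, 1 ≤ n ∧ 0 < (A ^ n) v w) :
    m w = 0 := by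
  obtain ⟨v, hv, n, -, hvw⟩ := hpath
  have hC : (A.submatrix (Subtype.val : C → V) Subtype.val).IsIrreducible :=
    (isIrreducible_iff_exists_pow_pos fun _ _ => hA _ _).mpr hirr
  have hleak : ∀ v ∈ C, ∀ x ∉ C, A v x * m x = 0 := fun v hv x hx =>
    apply_mul_eq_zero_of_mulVec_le_specRad_submatrix hA hC hm (fun v _ => hsub v) hv hx
  exact eq_zero_of_pow_apply_pos_of_notMem hA hm hsub hleak hv (hCH.notMem_of_mem_right hw) n hvw

/-- Matrix-theoretic core of Proposition 3.1: if `A` is block upper triangular for the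
partition `V = U ⊔ C ⊔ H`, the `C × C` block is irreducible, and `m` is a nonnegative
vector with `A · m ≤ ρ(A_C) · m` entrywise, then `m` vanishes at every `w ∈ H` that is
reachable from `C`. -/
theorem kms_vanishes_downstream {V : Type*} [Fintype V] [DecidableEq V]
    (U C H : Set V) [DecidablePred (· ∈ U)] [DecidablePred (· ∈ C)] [DecidablePred (· ∈ H)]
    (hUC : Disjoint U C) (hUH : Disjoint U H) (hCH : Disjoint C H)
    (hcover : U ∪ C ∪ H = Set.univ)
    (A : Matrix V V ℝ)
    (hA : ∀ v w, 0 ≤ A v w)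
    (hblock₁ : ∀ v ∈ C ∪ H, ∀ u ∈ U, A v u = 0)
    (hblock₂ : ∀ h ∈ H, ∀ c ∈ C, A h c = 0)
    (hirr : ∀ v w : C, ∃ m : ℕ, 1 ≤ m ∧
      0 < ((A.submatrix (Subtype.val : C → V) (Subtype.val : C → V)) ^ m) v w)
    (m : V → ℝ) (hm : ∀ v, 0 ≤ m v)
    (hsub : ∀ v, A.mulVec m v ≤
      specRad (A.submatrix (Subtype.val : C → V) (Subtype.val : C → V)) * m v)
    (w : V) (hw : w ∈ H)
    (hpath : ∃ v ∈ C, ∃ n : ℕ, 1 ≤ n ∧ 0 < (A ^ n) v w) :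
    m w = 0 :=
  kms_vanishes_downstream_general C H hCH A hA hirr m hm hsub w hw hpath
end

section
/- With the block setup in the context (k ≥ 1, pairwise commuting nonnegative matrices A_i on V = F ⊔ D ⊔ H with blocks E_i, B_i, D_i as described, and x a nonnegative common eigenvector with D_i x = ρ(D_i) x for all i), suppose the set L := { i ∈ {1,…,k} : ρ(E_i) < ρ(D_i) } is nonempty. Then: (a) for every i ∈ L the matrix ρ(D_i)·1_F − E_i is invertible; (b) for all i, j ∈ L one has (ρ(D_i)·1_F − E_i)⁻¹·(B_i·x) = (ρ(D_j)·1_F − E_j)⁻¹·(B_j·x); (c) writing y for this common vector, y has nonnegative entries; and (d) for every i ∈ {1,…,k}, the vector z on V which equals y on F, x on D and 0 on H satisfies A_i·z = ρ(D_i)·z. -/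
/-!
For `i ∈ L` Gelfand's formula makes the Neumann series `∑ₘ E_iᵐ / ρ(D_i)^(m+1)` converge, so
`ρ(D_i) - E_i` is invertible with entrywise nonnegative inverse. Comparing the `(F, D)` blocks of
`A_i A_j = A_j A_i` and using `D_j x = ρ(D_j) x` gives
`(ρ(D_i) - E_i) B_j x = (ρ(D_j) - E_j) B_i x`. As the matrices `ρ(D_i) - E_i` commute, the vector
`y = (ρ(D_{i₀}) - E_{i₀})⁻¹ B_{i₀} x` then solves `(ρ(D_i) - E_i) y = B_i x` for every `i`, which is
the `F`-row of `A_i z = ρ(D_i) z`; the other rows hold by the block form of `A_i`.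
-/

open Matrix

/-- For a matrix on `F ⊕ D ⊕ H`, the top-left `F × F` block `E`. -/
def blockE {F D H : Type*} (M : Matrix (F ⊕ D ⊕ H) (F ⊕ D ⊕ H) ℝ) : Matrix F F ℝ :=
  Matrix.of fun a b => M (Sum.inl a) (Sum.inl b)

/-- For a matrix on `F ⊕ D ⊕ H`, the `F × D` block `B`. -/
def blockB {F D H : Type*} (M : Matrix (F ⊕ D ⊕ H) (F ⊕ D ⊕ H) ℝ) : Matrix F D ℝ :=
  Matrix.of fun a b => M (Sum.inl a) (Sum.inr (Sum.inl b))

/-- For a matrix on `F ⊕ D ⊕ H`, the central `D × D` block. -/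
def blockD {F D H : Type*} (M : Matrix (F ⊕ D ⊕ H) (F ⊕ D ⊕ H) ℝ) : Matrix D D ℝ :=
  Matrix.of fun a b => M (Sum.inr (Sum.inl a)) (Sum.inr (Sum.inl b))

open Filter
open scoped NNReal ENNReal Topology

section Gelfand

variable {A : Type*} [NormedRing A] [NormedAlgebra ℂ A] [CompleteSpace A]

theorem spectralRadius_ne_top (a : A) : spectralRadius ℂ a ≠ ⊤ := by
  refine ne_top_of_le_ne_top ?_ (spectrum.spectralRadius_le_pow_nnnorm_pow_one_div ℂ a 0)
  simp [ENNReal.mul_ne_top]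

theorem eventually_nnnorm_pow_lt_of_spectralRadius_lt {a : A} {r : ℝ≥0}
    (h : spectralRadius ℂ a < r) : ∀ᶠ n : ℕ in atTop, ‖a ^ n‖₊ < r ^ n := by
  filter_upwards
    [(spectrum.pow_nnnorm_pow_one_div_tendsto_nhds_spectralRadius a).eventually_lt_const h,
      eventually_gt_atTop 0] with n hn hn0
  rw [one_div, ENNReal.rpow_inv_lt_iff (by positivity), ENNReal.rpow_natCast] at hn
  exact_mod_cast hn

end Gelfand

theorem specRad_nonneg {n : Type*} [Fintype n] [DecidableEq n] (M : Matrix n n ℝ) :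
    0 ≤ specRad M :=
  ENNReal.toReal_nonneg

section LinftyOpNorm

attribute [local instance] Matrix.linftyOpNormedRing Matrix.linftyOpNormedAlgebra

variable {n : Type*} [Fintype n] [DecidableEq n] {E : Matrix n n ℝ} {ρ : ℝ}

theorem exists_lt_eventually_norm_pow_le_of_specRad_lt (h : specRad E < ρ) :
    ∃ r : ℝ≥0, (r : ℝ) < ρ ∧ ∀ᶠ m : ℕ in atTop, ‖E ^ m‖ ≤ r ^ m := by
  have hρ : spectralRadius ℂ (E.map Complex.ofReal) < ENNReal.ofReal ρ := by
    rwa [← ENNReal.ofReal_toReal (spectralRadius_ne_top _),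
      ENNReal.ofReal_lt_ofReal_iff ((specRad_nonneg E).trans_lt h)]
  obtain ⟨r, hr, hrρ⟩ := ENNReal.lt_iff_exists_nnreal_btwn.mp hρ
  refine ⟨r, ENNReal.coe_lt_ofReal.mp hrρ, ?_⟩
  filter_upwards [eventually_nnnorm_pow_lt_of_spectralRadius_lt hr] with m hm
  have hmap : (E.map Complex.ofReal) ^ m = (E ^ m).map Complex.ofReal :=
    (map_pow Complex.ofRealHom.mapMatrix E m).symm
  have hnorm : ‖(E ^ m).map Complex.ofReal‖₊ = ‖E ^ m‖₊ := by
    simp [Matrix.linfty_opNNNorm_def]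
  rw [hmap, hnorm] at hm
  exact_mod_cast hm.le

theorem summable_pow_inv_smul_of_specRad_lt (h : specRad E < ρ) :
    Summable fun m : ℕ => (ρ⁻¹ • E) ^ m := by
  obtain ⟨r, hrρ, hr⟩ := exists_lt_eventually_norm_pow_le_of_specRad_lt h
  have hρ : 0 < ρ := r.coe_nonneg.trans_lt hrρ
  refine Summable.of_norm_bounded_eventually_nat
    (summable_geometric_of_lt_one (div_nonneg r.coe_nonneg hρ.le) ((div_lt_one hρ).mpr hrρ)) ?_
  filter_upwards [hr] with m hm
  rw [smul_pow, norm_smul, norm_pow, norm_inv, Real.norm_of_nonneg hρ.le, div_pow, div_eq_inv_mul,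
    inv_pow]
  gcongr

end LinftyOpNorm

section Resolvent

variable {n : Type*} [Fintype n] [DecidableEq n] {E : Matrix n n ℝ} {ρ : ℝ}

theorem smul_one_sub_mul_tsum_pow_eq_one (h : specRad E < ρ) :
    (ρ • 1 - E) * (ρ⁻¹ • ∑' m : ℕ, (ρ⁻¹ • E) ^ m) = 1 := by
  have hρ : ρ ≠ 0 := ((specRad_nonneg E).trans_lt h).ne'
  have hfactor : ρ • 1 - E = ρ • (1 - ρ⁻¹ • E) := by
    rw [smul_sub, smul_smul, mul_inv_cancel₀ hρ, one_smul]
  rw [hfactor, smul_mul_smul, mul_inv_cancel₀ hρ, one_smul,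
    (summable_pow_inv_smul_of_specRad_lt h).one_sub_mul_tsum_pow]

theorem isUnit_smul_one_sub_of_specRad_lt (h : specRad E < ρ) : IsUnit (ρ • 1 - E) :=
  (Matrix.isUnit_iff_isUnit_det _).mpr
    (Matrix.isUnit_det_of_right_inverse (smul_one_sub_mul_tsum_pow_eq_one h))

theorem inv_smul_one_sub_apply_nonneg (hE : ∀ a b, 0 ≤ E a b) (h : specRad E < ρ) (a b : n) :
    0 ≤ (ρ • 1 - E)⁻¹ a b := by
  have hρ : 0 ≤ ρ⁻¹ := inv_nonneg.mpr ((specRad_nonneg E).trans h.le)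
  have hsum := (summable_pow_inv_smul_of_specRad_lt h).hasSum
  rw [Matrix.inv_eq_right_inv (smul_one_sub_mul_tsum_pow_eq_one h), Matrix.smul_apply]
  exact mul_nonneg hρ ((Pi.hasSum.mp (Pi.hasSum.mp hsum a) b).nonneg fun m =>
    Matrix.pow_apply_nonneg (fun i j => mul_nonneg hρ (hE i j)) m a b)

end Resolvent

section CommutingSystem

variable {R n : Type*} [CommRing R] [Fintype n] [DecidableEq n] {M N : Matrix n n R}

theorem Matrix.inv_mulVec_eq_of_mulVec_eq (hM : IsUnit M) {y b : n → R} (hy : M *ᵥ y = b) :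
    M⁻¹ *ᵥ b = y := by
  rw [← hy, Matrix.mulVec_mulVec,
    Matrix.nonsing_inv_mul _ ((Matrix.isUnit_iff_isUnit_det M).mp hM), Matrix.one_mulVec]

theorem Matrix.mulVec_inv_mulVec (hM : IsUnit M) (b : n → R) : M *ᵥ (M⁻¹ *ᵥ b) = b := by
  rw [Matrix.mulVec_mulVec, Matrix.mul_nonsing_inv _ ((Matrix.isUnit_iff_isUnit_det M).mp hM),
    Matrix.one_mulVec]

theorem Matrix.mulVec_eq_of_commute_of_isUnit (hMN : Commute M N) (hM : IsUnit M)
    {y b c : n → R} (hy : M *ᵥ y = b) (hbc : N *ᵥ b = M *ᵥ c) : N *ᵥ y = c := by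
  have h : M *ᵥ (N *ᵥ y) = M *ᵥ c := by
    rw [Matrix.mulVec_mulVec, hMN.eq, ← Matrix.mulVec_mulVec, hy, hbc]
  rw [← Matrix.inv_mulVec_eq_of_mulVec_eq hM h, Matrix.inv_mulVec_eq_of_mulVec_eq hM rfl]

end CommutingSystem

theorem Matrix.mulVec_apply_nonneg {R m n : Type*} [CommSemiring R] [PartialOrder R]
    [IsOrderedRing R] [Fintype n] {M : Matrix m n R} {v : n → R} (hM : ∀ i j, 0 ≤ M i j)
    (hv : ∀ j, 0 ≤ v j) (i : m) : 0 ≤ (M *ᵥ v) i :=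
  Finset.sum_nonneg fun j _ => mul_nonneg (hM i j) (hv j)

section BlockUpperTriangular

open Sum

variable {F D H : Type*} [Fintype F] [Fintype D] [Fintype H]

structure IsBlockUpperTriangular (M : Matrix (F ⊕ D ⊕ H) (F ⊕ D ⊕ H) ℝ) : Prop where
  DF : ∀ d f, M (inr (inl d)) (inl f) = 0
  HF : ∀ h f, M (inr (inr h)) (inl f) = 0
  HD : ∀ h d, M (inr (inr h)) (inr (inl d)) = 0

variable {M N : Matrix (F ⊕ D ⊕ H) (F ⊕ D ⊕ H) ℝ}

theorem IsBlockUpperTriangular.blockE_mul (hN : IsBlockUpperTriangular N) :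
    blockE (M * N) = blockE M * blockE N := by
  ext a b
  simp [blockE, Matrix.mul_apply, Fintype.sum_sum_type, hN.DF, hN.HF]

theorem IsBlockUpperTriangular.blockB_mul (hN : IsBlockUpperTriangular N) :
    blockB (M * N) = blockE M * blockB N + blockB M * blockD N := by
  ext a d
  simp [blockE, blockB, blockD, Matrix.mul_apply, Fintype.sum_sum_type, hN.HD]

theorem IsBlockUpperTriangular.mulVec_sumElim [DecidableEq F] (hM : IsBlockUpperTriangular M)
    {ρ : ℝ} {y : F → ℝ} {x : D → ℝ} (hy : (ρ • 1 - blockE M) *ᵥ y = blockB M *ᵥ x)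
    (hx : blockD M *ᵥ x = ρ • x) :
    M *ᵥ Sum.elim y (Sum.elim x 0) = ρ • Sum.elim y (Sum.elim x 0) := by
  rw [Matrix.sub_mulVec, Matrix.smul_mulVec, Matrix.one_mulVec, sub_eq_iff_eq_add'] at hy
  ext (a | d | h)
  · simpa [Matrix.mulVec, dotProduct, Fintype.sum_sum_type, blockE, blockB] using
      (congrFun hy a).symm
  · simpa [Matrix.mulVec, dotProduct, Fintype.sum_sum_type, blockD, hM.DF] using congrFun hx d
  · simp [Matrix.mulVec, dotProduct, Fintype.sum_sum_type, hM.HF, hM.HD]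

end BlockUpperTriangular

section CommutingBlockUpperTriangular

variable {F D H : Type*} [Fintype F] [DecidableEq F] [Fintype D] [Fintype H]
  {M N : Matrix (F ⊕ D ⊕ H) (F ⊕ D ⊕ H) ℝ}

theorem IsBlockUpperTriangular.commute_smul_one_sub_blockE (hM : IsBlockUpperTriangular M)
    (hN : IsBlockUpperTriangular N) (hMN : Commute M N) (ρ σ : ℝ) :
    Commute (ρ • 1 - blockE M) (σ • 1 - blockE N) := by
  have hE : Commute (blockE M) (blockE N) := by
    rw [Commute, SemiconjBy, ← hN.blockE_mul, ← hM.blockE_mul, hMN.eq]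
  exact ((Commute.one_left _).smul_left ρ).sub_left
    (((Commute.one_right _).smul_right σ).sub_right hE)

theorem IsBlockUpperTriangular.smul_one_sub_blockE_mulVec_blockB_mulVec_comm
    (hM : IsBlockUpperTriangular M) (hN : IsBlockUpperTriangular N) (hMN : Commute M N)
    {x : D → ℝ} {ρ σ : ℝ} (hMx : blockD M *ᵥ x = ρ • x) (hNx : blockD N *ᵥ x = σ • x) :
    (ρ • 1 - blockE M) *ᵥ (blockB N *ᵥ x) = (σ • 1 - blockE N) *ᵥ (blockB M *ᵥ x) := by
  have h := congrArg (fun P => blockB P *ᵥ x) hMN.eq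
  simp only [hN.blockB_mul, hM.blockB_mul, Matrix.add_mulVec, ← Matrix.mulVec_mulVec, hMx, hNx,
    Matrix.mulVec_smul] at h
  simp only [Matrix.sub_mulVec, Matrix.smul_mulVec, Matrix.one_mulVec]
  linear_combination (norm := module) -h

end CommutingBlockUpperTriangular

theorem extend_PF_eigenvector_general {k : ℕ}
    {F D H : Type*} [Fintype F] [DecidableEq F] [Fintype D] [DecidableEq D]
    [Fintype H]
    (A : Fin k → Matrix (F ⊕ D ⊕ H) (F ⊕ D ⊕ H) ℝ)
    (hnonneg : ∀ i v w, 0 ≤ A i v w)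
    (hcomm : ∀ i j, A i * A j = A j * A i)
    (hDF : ∀ i d f, A i (Sum.inr (Sum.inl d)) (Sum.inl f) = 0)
    (hHF : ∀ i h f, A i (Sum.inr (Sum.inr h)) (Sum.inl f) = 0)
    (hHD : ∀ i h d, A i (Sum.inr (Sum.inr h)) (Sum.inr (Sum.inl d)) = 0)
    (x : D → ℝ) (hx : ∀ d, 0 ≤ x d)
    (hxeig : ∀ i, (blockD (A i)).mulVec x = specRad (blockD (A i)) • x) :
    (∀ i, specRad (blockE (A i)) < specRad (blockD (A i)) →
      IsUnit (specRad (blockD (A i)) • (1 : Matrix F F ℝ) - blockE (A i))) ∧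
    (∀ i j, specRad (blockE (A i)) < specRad (blockD (A i)) →
      specRad (blockE (A j)) < specRad (blockD (A j)) →
      ((specRad (blockD (A i)) • (1 : Matrix F F ℝ) - blockE (A i))⁻¹).mulVec
          ((blockB (A i)).mulVec x) =
        ((specRad (blockD (A j)) • (1 : Matrix F F ℝ) - blockE (A j))⁻¹).mulVec
          ((blockB (A j)).mulVec x)) ∧
    (∀ i₀, specRad (blockE (A i₀)) < specRad (blockD (A i₀)) →
      (∀ f, 0 ≤ ((specRad (blockD (A i₀)) • (1 : Matrix F F ℝ) - blockE (A i₀))⁻¹).mulVec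
          ((blockB (A i₀)).mulVec x) f) ∧
      (∀ i, (A i).mulVec
          (Sum.elim
            (((specRad (blockD (A i₀)) • (1 : Matrix F F ℝ) - blockE (A i₀))⁻¹).mulVec
              ((blockB (A i₀)).mulVec x))
            (Sum.elim x (0 : H → ℝ))) =
        specRad (blockD (A i)) •
          Sum.elim
            (((specRad (blockD (A i₀)) • (1 : Matrix F F ℝ) - blockE (A i₀))⁻¹).mulVec
              ((blockB (A i₀)).mulVec x))
            (Sum.elim x (0 : H → ℝ)))) := by
  have hA : ∀ i, IsBlockUpperTriangular (A i) := fun i => ⟨hDF i, hHF i, hHD i⟩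
  have hunit : ∀ i, specRad (blockE (A i)) < specRad (blockD (A i)) →
      IsUnit (specRad (blockD (A i)) • (1 : Matrix F F ℝ) - blockE (A i)) :=
    fun i hi => isUnit_smul_one_sub_of_specRad_lt hi
  have hsolve : ∀ i₀, specRad (blockE (A i₀)) < specRad (blockD (A i₀)) → ∀ i,
      (specRad (blockD (A i)) • (1 : Matrix F F ℝ) - blockE (A i)) *ᵥ
        ((specRad (blockD (A i₀)) • (1 : Matrix F F ℝ) - blockE (A i₀))⁻¹ *ᵥ
          (blockB (A i₀) *ᵥ x)) = blockB (A i) *ᵥ x :=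
    fun i₀ hi₀ i => Matrix.mulVec_eq_of_commute_of_isUnit
      ((hA i₀).commute_smul_one_sub_blockE (hA i) (hcomm i₀ i) _ _) (hunit i₀ hi₀)
      (Matrix.mulVec_inv_mulVec (hunit i₀ hi₀) _)
      ((hA i).smul_one_sub_blockE_mulVec_blockB_mulVec_comm (hA i₀) (hcomm i i₀) (hxeig i)
        (hxeig i₀))
  refine ⟨hunit, fun i j hi hj => Matrix.inv_mulVec_eq_of_mulVec_eq (hunit i hi) (hsolve j hj i),
    fun i₀ hi₀ => ⟨Matrix.mulVec_apply_nonneg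
      (inv_smul_one_sub_apply_nonneg (fun _ _ => hnonneg i₀ _ _) hi₀)
      (Matrix.mulVec_apply_nonneg (fun _ _ => hnonneg i₀ _ _) hx),
    fun i => (hA i).mulVec_sumElim (hsolve i₀ hi₀ i) (hxeig i)⟩⟩

/-- Part (2) of Proposition 4.1: if `L = {i : ρ(E_i) < ρ(D_i)}` is nonempty, then for `i ∈ L`
the matrices `ρ(D_i)·1_F − E_i` are invertible, the vectors
`(ρ(D_i)·1_F − E_i)⁻¹ (B_i x)` agree for all `i ∈ L`, the common vector `y` is nonnegative,
and `z = (y, x, 0)` is an eigenvector of every `A_i` with eigenvalue `ρ(D_i)`. -/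
theorem extend_PF_eigenvector {k : ℕ} (hk : 1 ≤ k)
    {F D H : Type*} [Fintype F] [DecidableEq F] [Fintype D] [DecidableEq D]
    [Fintype H] [DecidableEq H]
    (A : Fin k → Matrix (F ⊕ D ⊕ H) (F ⊕ D ⊕ H) ℝ)
    (hnonneg : ∀ i v w, 0 ≤ A i v w)
    (hcomm : ∀ i j, A i * A j = A j * A i)
    (hDF : ∀ i d f, A i (Sum.inr (Sum.inl d)) (Sum.inl f) = 0)
    (hDH : ∀ i d h, A i (Sum.inr (Sum.inl d)) (Sum.inr (Sum.inr h)) = 0)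
    (hHF : ∀ i h f, A i (Sum.inr (Sum.inr h)) (Sum.inl f) = 0)
    (hHD : ∀ i h d, A i (Sum.inr (Sum.inr h)) (Sum.inr (Sum.inl d)) = 0)
    (x : D → ℝ) (hx : ∀ d, 0 ≤ x d)
    (hxeig : ∀ i, (blockD (A i)).mulVec x = specRad (blockD (A i)) • x)
    (hL : ∃ i, specRad (blockE (A i)) < specRad (blockD (A i))) :
    (∀ i, specRad (blockE (A i)) < specRad (blockD (A i)) →
      IsUnit (specRad (blockD (A i)) • (1 : Matrix F F ℝ) - blockE (A i))) ∧
    (∀ i j, specRad (blockE (A i)) < specRad (blockD (A i)) →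
      specRad (blockE (A j)) < specRad (blockD (A j)) →
      ((specRad (blockD (A i)) • (1 : Matrix F F ℝ) - blockE (A i))⁻¹).mulVec
          ((blockB (A i)).mulVec x) =
        ((specRad (blockD (A j)) • (1 : Matrix F F ℝ) - blockE (A j))⁻¹).mulVec
          ((blockB (A j)).mulVec x)) ∧
    (∀ i₀, specRad (blockE (A i₀)) < specRad (blockD (A i₀)) →
      (∀ f, 0 ≤ ((specRad (blockD (A i₀)) • (1 : Matrix F F ℝ) - blockE (A i₀))⁻¹).mulVec
          ((blockB (A i₀)).mulVec x) f) ∧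
      (∀ i, (A i).mulVec
          (Sum.elim
            (((specRad (blockD (A i₀)) • (1 : Matrix F F ℝ) - blockE (A i₀))⁻¹).mulVec
              ((blockB (A i₀)).mulVec x))
            (Sum.elim x (0 : H → ℝ))) =
        specRad (blockD (A i)) •
          Sum.elim
            (((specRad (blockD (A i₀)) • (1 : Matrix F F ℝ) - blockE (A i₀))⁻¹).mulVec
              ((blockB (A i₀)).mulVec x))
            (Sum.elim x (0 : H → ℝ)))) :=
  extend_PF_eigenvector_general A hnonneg hcomm hDF hHF hHD x hx hxeig
end

section
/- Let A_1,…,A_k (k ≥ 1) be pairwise commuting V×V matrices with nonnegative integer entries, each with no zero row and no zero column, such that every vertex lies in a nontrivial strongly connected component and every strongly connected component is coordinatewise irreducible. Assume that for all strongly connected components C and D the following holds: if there exist j ∈ {1,…,k}, m ∈ ℕ, v ∈ C and w ∈ D with (A_j^m)(v,w) > 0, then for every i ∈ {1,…,k} there exist m' ∈ ℕ, v' ∈ C and w' ∈ D with (A_i^{m'})(v',w') > 0. Then for all vertices v, w: if v reaches w (i.e. A^n(v,w) > 0 for some n : {1,…,k} → ℕ), then for every i ∈ {1,…,k} there exists m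 ∈ ℕ with (A_i^m)(v,w) > 0. -/
open Matrix

variable {V : Type*} [Fintype V] [DecidableEq V]

/-- `Apow A n = ∏ i, (A i)^(n i)`, the vertex matrix counting paths of degree `n`. -/
def Apow {k : ℕ} (A : Fin k → Matrix V V ℕ) (n : Fin k → ℕ) : Matrix V V ℕ :=
  ((List.finRange k).map fun i => (A i) ^ (n i)).prod

/-- `v` reaches `w` if some `A^n` has a positive `(v, w)` entry. -/
def Reaches {k : ℕ} (A : Fin k → Matrix V V ℕ) (v w : V) : Prop :=
  ∃ n : Fin k → ℕ, 0 < Apow A n v w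

/-- `C` is a strongly connected component: the equivalence class of some vertex `v`
for the relation `v` reaches `w` and `w` reaches `v`. -/
def IsSCC {k : ℕ} (A : Fin k → Matrix V V ℕ) (C : Finset V) : Prop :=
  ∃ v : V, ∀ w : V, w ∈ C ↔ (Reaches A v w ∧ Reaches A w v)

/-- A component is nontrivial if it contains a vertex with a loop of nonzero degree. -/
def NontrivialComp {k : ℕ} (A : Fin k → Matrix V V ℕ) (C : Finset V) : Prop :=
  ∃ v ∈ C, ∃ n : Fin k → ℕ, n ≠ 0 ∧ 0 < Apow A n v v

/-- A component is coordinatewise irreducible if for each colour `i` and all `v, w ∈ C`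
there is `m ≥ 1` with `(A_i^m)(v, w) > 0`. -/
def CoordIrreducible {k : ℕ} (A : Fin k → Matrix V V ℕ) (C : Finset V) : Prop :=
  ∀ i : Fin k, ∀ v ∈ C, ∀ w ∈ C, ∃ m : ℕ, 1 ≤ m ∧ 0 < ((A i) ^ m) v w

/-- A subset `S` is hereditary if `v ∈ S` and `v` reaches `w` imply `w ∈ S`. -/
def Hereditary {k : ℕ} (A : Fin k → Matrix V V ℕ) (S : Finset V) : Prop :=
  ∀ v ∈ S, ∀ w : V, Reaches A v w → w ∈ S

/-- The spectral radius of a square matrix of natural numbers: the maximum modulus of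
its complex eigenvalues. -/
noncomputable def specRadN {n : Type*} [Fintype n] [DecidableEq n] (M : Matrix n n ℕ) : ℝ :=
  (spectralRadius ℂ (M.map (Nat.cast : ℕ → ℂ))).toReal

/-- `compRad A C i` is the spectral radius of the `C × C` submatrix of `A i`. -/
noncomputable def compRad {k : ℕ} (A : Fin k → Matrix V V ℕ) (C : Finset V) (i : Fin k) : ℝ :=
  specRadN ((A i).submatrix (fun c : {x // x ∈ C} => c.1) (fun c : {x // x ∈ C} => c.1))

/-!
Along a path of any degree every edge has a single colour `j`, and an edge of colour `j` from
`v` to `u` connects the component of `v` to that of `u` in colour `j`, hence, by hypothesis, in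
every colour `i`. Coordinatewise irreducibility lets us enter and leave the two components in
colour `i`, so `v` reaches `u` by a path of colour `i` alone; concatenating these paths handles
an arbitrary path.
-/

namespace Matrix

variable {n : Type*} [Fintype n]

theorem mul_apply_pos_iff {M N : Matrix n n ℕ} {u w : n} :
    0 < (M * N) u w ↔ ∃ v, 0 < M u v ∧ 0 < N v w := by
  simp [mul_apply, Finset.sum_pos_iff, CanonicallyOrderedAdd.mul_pos]

variable [DecidableEq n]

def ReachesIn (M : Matrix n n ℕ) (v w : n) : Prop :=
  ∃ m : ℕ, 0 < (M ^ m) v w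

theorem ReachesIn.refl (M : Matrix n n ℕ) (v : n) : ReachesIn M v v :=
  ⟨0, by simp⟩

theorem ReachesIn.trans {M : Matrix n n ℕ} {u v w : n} (huv : ReachesIn M u v)
    (hvw : ReachesIn M v w) : ReachesIn M u w := by
  obtain ⟨a, ha⟩ := huv
  obtain ⟨b, hb⟩ := hvw
  exact ⟨a + b, by rw [pow_add]; exact mul_apply_pos_iff.2 ⟨v, ha, hb⟩⟩

instance (M : Matrix n n ℕ) : Std.Refl (ReachesIn M) := ⟨ReachesIn.refl M⟩

instance (M : Matrix n n ℕ) : IsTrans n (ReachesIn M) := ⟨fun _ _ _ => ReachesIn.trans⟩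

theorem rel_of_list_prod_apply_pos {R : n → n → Prop} [Std.Refl R] [IsTrans n R]
    {L : List (Matrix n n ℕ)} (hL : ∀ M ∈ L, ∀ v w, 0 < M v w → R v w) {v w : n}
    (h : 0 < L.prod v w) : R v w := by
  induction L generalizing v with
  | nil =>
    obtain rfl : v = w := by by_contra hvw; simp [hvw] at h
    exact refl_of R v
  | cons M L ih =>
    obtain ⟨u, hvu, huw⟩ := mul_apply_pos_iff.1 (by rwa [List.prod_cons] at h)
    exact _root_.trans (hL M (by simp) v u hvu) (ih (fun N hN => hL N (by simp [hN])) huw)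

end Matrix

section

variable {k : ℕ} {A : Fin k → Matrix V V ℕ}

theorem CoordIrreducible.reachesIn {C : Finset V} (hC : CoordIrreducible A C) (i : Fin k)
    {v w : V} (hv : v ∈ C) (hw : w ∈ C) : ReachesIn (A i) v w :=
  let ⟨m, _, h⟩ := hC i v hv w hw
  ⟨m, h⟩

theorem reachesIn_of_pow_apply_pos
    (hcover : ∀ v : V, ∃ C : Finset V, IsSCC A C ∧ v ∈ C)
    (hirr : ∀ C : Finset V, IsSCC A C → CoordIrreducible A C)
    (hconn : ∀ C D : Finset V, IsSCC A C → IsSCC A D →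
      (∃ j : Fin k, ∃ m : ℕ, ∃ v ∈ C, ∃ w ∈ D, 0 < ((A j) ^ m) v w) →
      ∀ i : Fin k, ∃ m : ℕ, ∃ v ∈ C, ∃ w ∈ D, 0 < ((A i) ^ m) v w)
    {j : Fin k} {m : ℕ} {v w : V} (h : 0 < (A j ^ m) v w) (i : Fin k) :
    ReachesIn (A i) v w := by
  obtain ⟨C, hC, hvC⟩ := hcover v
  obtain ⟨D, hD, hwD⟩ := hcover w
  obtain ⟨m', v', hv', w', hw', hv'w'⟩ := hconn C D hC hD ⟨j, m, v, hvC, w, hwD, h⟩ i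
  exact ((hirr C hC).reachesIn i hvC hv').trans
    (ReachesIn.trans ⟨m', hv'w'⟩ ((hirr D hD).reachesIn i hw' hwD))

end

theorem reaches_in_every_colour_general {V : Type*} [Fintype V] [DecidableEq V]
    {k : ℕ}
    (A : Fin k → Matrix V V ℕ)
    (hcover : ∀ v : V, ∃ C : Finset V, IsSCC A C ∧ v ∈ C ∧ NontrivialComp A C)
    (hirr : ∀ C : Finset V, IsSCC A C → CoordIrreducible A C)
    (hconn : ∀ C D : Finset V, IsSCC A C → IsSCC A D →
      (∃ j : Fin k, ∃ m : ℕ, ∃ v ∈ C, ∃ w ∈ D, 0 < ((A j) ^ m) v w) →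
      ∀ i : Fin k, ∃ m : ℕ, ∃ v ∈ C, ∃ w ∈ D, 0 < ((A i) ^ m) v w) :
    ∀ v w : V, Reaches A v w → ∀ i : Fin k, ∃ m : ℕ, 0 < ((A i) ^ m) v w := by
  have hcover' (v : V) : ∃ C : Finset V, IsSCC A C ∧ v ∈ C :=
    let ⟨C, hC, hv, _⟩ := hcover v
    ⟨C, hC, hv⟩
  rintro v w ⟨n, hn⟩ i
  refine rel_of_list_prod_apply_pos (R := ReachesIn (A i)) ?_ hn
  simp only [List.mem_map, List.mem_finRange, true_and, forall_exists_index,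
    forall_apply_eq_imp_iff]
  exact fun j _ _ h => reachesIn_of_pow_apply_pos hcover' hirr hconn h i

/-- Lemma 3.3 of the paper: if every vertex lies in a nontrivial strongly connected
component, every component is coordinatewise irreducible, and any two components that are
connected in one colour are connected in every colour, then `v` reaches `w` implies that
`v` reaches `w` by paths of a single colour, for every colour. -/
theorem reaches_in_every_colour {V : Type*} [Fintype V] [DecidableEq V] [Nonempty V]
    {k : ℕ} (hk : 1 ≤ k)
    (A : Fin k → Matrix V V ℕ)
    (hcomm : ∀ i j, A i * A j = A j * A i)
    (hrow : ∀ i v, ∃ w, A i v w ≠ 0)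
    (hcol : ∀ i v, ∃ w, A i w v ≠ 0)
    (hcover : ∀ v : V, ∃ C : Finset V, IsSCC A C ∧ v ∈ C ∧ NontrivialComp A C)
    (hirr : ∀ C : Finset V, IsSCC A C → CoordIrreducible A C)
    (hconn : ∀ C D : Finset V, IsSCC A C → IsSCC A D →
      (∃ j : Fin k, ∃ m : ℕ, ∃ v ∈ C, ∃ w ∈ D, 0 < ((A j) ^ m) v w) →
      ∀ i : Fin k, ∃ m : ℕ, ∃ v ∈ C, ∃ w ∈ D, 0 < ((A i) ^ m) v w) :
    ∀ v w : V, Reaches A v w → ∀ i : Fin k, ∃ m : ℕ, 0 < ((A i) ^ m) v w :=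
  reaches_in_every_colour_general A hcover hirr hconn
end

section
/- Let A_1,…,A_k (k ≥ 1) be pairwise commuting V×V matrices with nonnegative integer entries, each with no zero row and no zero column, such that every vertex lies in a nontrivial strongly connected component and every strongly connected component is coordinatewise irreducible. Let r ∈ (0,∞)^k satisfy ρ(A_i) ≤ e^{r_i} for all i. Call a strongly connected component C critical if ρ(A_{C,j}) = e^{r_j} for some j ∈ {1,…,k}; order components by C ≤ D iff some vertex of C reaches some vertex of D, and let 𝒞_mincrit be the set of critical components that are minimal among critical components for this order. Set G := ⋃{C : C ∈ 𝒞_mincrit}, let H' := {w ∈ V : some v ∈ G reaches w} be the hereditary closure of G, and put H := H' \ G. Then: (i) H is hereditary; (ii) for every C ∈ 𝒞_mincrit, if v ∉ H and some vertex of C reaches v, then v ∈ C (i.e. C is hereditary in V \ H); and (iii) every critical component not belonging to 𝒞_mincrit is contained in H. -/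
open Matrix

variable {V : Type*} [Fintype V] [DecidableEq V]

/-- The partial order on components: `C ≤ D` iff some vertex of `C` reaches some vertex
of `D`. -/
def CompLE {V : Type*} [Fintype V] [DecidableEq V] {k : ℕ}
    (A : Fin k → Matrix V V ℕ) (C D : Finset V) : Prop :=
  ∃ v ∈ C, ∃ w ∈ D, Reaches A v w

/-- A component `C` is critical if `ρ(A_{C,j}) = e^{r_j}` for some colour `j`. -/
def Critical {V : Type*} [Fintype V] [DecidableEq V] {k : ℕ}
    (A : Fin k → Matrix V V ℕ) (r : Fin k → ℝ) (C : Finset V) : Prop :=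
  IsSCC A C ∧ ∃ j : Fin k, compRad A C j = Real.exp (r j)

/-- A critical component is minimal if the only critical component below it is itself. -/
def MinCrit {V : Type*} [Fintype V] [DecidableEq V] {k : ℕ}
    (A : Fin k → Matrix V V ℕ) (r : Fin k → ℝ) (C : Finset V) : Prop :=
  Critical A r C ∧ ∀ C' : Finset V, Critical A r C' → CompLE A C' C → C' = C

/-- `G`: the union of the minimal critical components. -/
def Gset {V : Type*} [Fintype V] [DecidableEq V] {k : ℕ}
    (A : Fin k → Matrix V V ℕ) (r : Fin k → ℝ) : Set V :=
  {v | ∃ C : Finset V, MinCrit A r C ∧ v ∈ C}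

/-- `H`: the hereditary closure of `G` minus `G`. -/
def Hset {V : Type*} [Fintype V] [DecidableEq V] {k : ℕ}
    (A : Fin k → Matrix V V ℕ) (r : Fin k → ℝ) : Set V :=
  {w | ∃ v ∈ Gset A r, Reaches A v w} \ Gset A r

/-!
Reachability is a preorder because the `A i` commute, so that `A^(n+m) = A^n A^m`; its classes
are the components, and it induces a partial order on them. As there are finitely many
components, every critical component lies above a minimal critical one, which gives (iii).
Distinct minimal critical components are incomparable. This gives (ii), and also (i): if `u ∈ G`
reaches `v`, which reaches `w ∈ G`, then `w` lies in the component of `u`, hence so does `v`.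
-/

theorem List.prod_map_pow_add {ι M : Type*} [Monoid M] {f : ι → M}
    (hf : ∀ i j, Commute (f i) (f j)) (n m : ι → ℕ) (l : List ι) :
    (l.map fun i => f i ^ (n i + m i)).prod =
      (l.map fun i => f i ^ n i).prod * (l.map fun i => f i ^ m i).prod := by
  induction l with
  | nil => simp
  | cons i l ih =>
    have hc : Commute (f i ^ m i) (l.map fun j => f j ^ n j).prod :=
      Commute.list_prod_right _ _ fun x hx => by
        obtain ⟨j, -, rfl⟩ := List.mem_map.1 hx
        exact (hf i j).pow_pow _ _
    rw [List.map_cons, List.map_cons, List.map_cons, List.prod_cons, List.prod_cons,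
      List.prod_cons, ih, pow_add, mul_assoc, mul_assoc, hc.left_comm]

section Reachability

variable {k : ℕ} {A : Fin k → Matrix V V ℕ} {C D E : Finset V}

theorem Apow_zero : Apow A 0 = 1 := by
  simp [Apow]

theorem Apow_add (hcomm : ∀ i j, A i * A j = A j * A i) (n m : Fin k → ℕ) :
    Apow A (n + m) = Apow A n * Apow A m :=
  List.prod_map_pow_add hcomm n m _

theorem Reaches.refl (v : V) : Reaches A v v :=
  ⟨0, by simp [Apow_zero]⟩

theorem Reaches.trans (hcomm : ∀ i j, A i * A j = A j * A i) {u v w : V}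
    (huv : Reaches A u v) (hvw : Reaches A v w) : Reaches A u w := by
  obtain ⟨n, hn⟩ := huv
  obtain ⟨m, hm⟩ := hvw
  refine ⟨n + m, ?_⟩
  rw [Apow_add hcomm, Matrix.mul_apply]
  exact Finset.sum_pos' (fun _ _ => Nat.zero_le _) ⟨v, Finset.mem_univ v, Nat.mul_pos hn hm⟩

theorem CompLE.refl (hC : IsSCC A C) : CompLE A C C := by
  obtain ⟨b, hb⟩ := hC
  have hbC : b ∈ C := (hb b).2 ⟨Reaches.refl b, Reaches.refl b⟩
  exact ⟨b, hbC, b, hbC, Reaches.refl b⟩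

variable (hcomm : ∀ i j, A i * A j = A j * A i)
include hcomm

theorem IsSCC.reaches (hC : IsSCC A C) {u w : V} (hu : u ∈ C) (hw : w ∈ C) : Reaches A u w := by
  obtain ⟨b, hb⟩ := hC
  exact ((hb u).1 hu).2.trans hcomm ((hb w).1 hw).1

theorem IsSCC.mem_of_reaches (hC : IsSCC A C) {u w : V} (hu : u ∈ C)
    (huw : Reaches A u w) (hwu : Reaches A w u) : w ∈ C := by
  obtain ⟨b, hb⟩ := hC
  exact (hb w).2 ⟨((hb u).1 hu).1.trans hcomm huw, hwu.trans hcomm ((hb u).1 hu).2⟩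

theorem IsSCC.eq_of_mem (hC : IsSCC A C) (hD : IsSCC A D) {u : V} (huC : u ∈ C) (huD : u ∈ D) :
    C = D := by
  ext w
  exact ⟨fun hw => hD.mem_of_reaches hcomm huD (hC.reaches hcomm huC hw)
      (hC.reaches hcomm hw huC),
    fun hw => hC.mem_of_reaches hcomm huC (hD.reaches hcomm huD hw) (hD.reaches hcomm hw huD)⟩

theorem CompLE.trans (hD : IsSCC A D) (hCD : CompLE A C D) (hDE : CompLE A D E) :
    CompLE A C E := by
  obtain ⟨u, hu, v, hv, huv⟩ := hCD
  obtain ⟨v', hv', w, hw, hv'w⟩ := hDE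
  exact ⟨u, hu, w, hw, (huv.trans hcomm (hD.reaches hcomm hv hv')).trans hcomm hv'w⟩

theorem CompLE.antisymm (hC : IsSCC A C) (hD : IsSCC A D) (hCD : CompLE A C D)
    (hDC : CompLE A D C) : C = D := by
  obtain ⟨u, hu, v, hv, huv⟩ := hCD
  obtain ⟨v', hv', u', hu', hv'u'⟩ := hDC
  have hvu : Reaches A v u :=
    ((hD.reaches hcomm hv hv').trans hcomm hv'u').trans hcomm (hC.reaches hcomm hu' hu)
  exact hC.eq_of_mem hcomm hD (hC.mem_of_reaches hcomm hu huv hvu) hv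

end Reachability

section CriticalComponents

variable {k : ℕ} {A : Fin k → Matrix V V ℕ} {r : Fin k → ℝ} {C D : Finset V}

theorem MinCrit.eq_of_reaches (hC : MinCrit A r C) (hD : MinCrit A r D) {u w : V}
    (hu : u ∈ C) (hw : w ∈ D) (huw : Reaches A u w) : C = D :=
  hD.2 C hC.1 ⟨u, hu, w, hw, huw⟩

theorem MinCrit.mem_of_reaches_of_notMem_Hset (hC : MinCrit A r C) {u v : V} (hu : u ∈ C)
    (huv : Reaches A u v) (hv : v ∉ Hset A r) : v ∈ C := by
  obtain ⟨D, hD, hvD⟩ : v ∈ Gset A r := by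
    by_contra hvG
    exact hv ⟨⟨u, ⟨C, hC, hu⟩, huv⟩, hvG⟩
  rwa [hC.eq_of_reaches hD hu hvD huv]

variable (hcomm : ∀ i j, A i * A j = A j * A i)
include hcomm

theorem exists_minCrit_compLE (hD : Critical A r D) : ∃ C, MinCrit A r C ∧ CompLE A C D := by
  let StrictlyBelow : Finset V → Finset V → Prop := fun C C' =>
    IsSCC A C ∧ IsSCC A C' ∧ CompLE A C C' ∧ C ≠ C'
  have : IsTrans (Finset V) StrictlyBelow :=
    ⟨fun C₁ C₂ C₃ ⟨h₁, h₂, h₁₂, hne⟩ ⟨_, h₃, h₂₃, _⟩ =>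
      ⟨h₁, h₃, h₁₂.trans hcomm h₂ h₂₃,
        fun h => hne (h₁₂.antisymm hcomm h₁ h₂ (h ▸ h₂₃))⟩⟩
  have : Std.Irrefl StrictlyBelow := ⟨fun _ h => h.2.2.2 rfl⟩
  obtain ⟨C, ⟨hC, hCD⟩, hmin⟩ :=
    (Finite.wellFounded_of_trans_of_irrefl StrictlyBelow).has_min
      {C | Critical A r C ∧ CompLE A C D} ⟨D, hD, CompLE.refl hD.1⟩
  refine ⟨C, ⟨hC, fun C' hC' hC'C => ?_⟩, hCD⟩
  by_contra hne
  exact hmin C' ⟨hC', hC'C.trans hcomm hC.1 hCD⟩ ⟨hC'.1, hC.1, hC'C, hne⟩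

theorem mem_Hset_of_reaches {v w : V} (hv : v ∈ Hset A r) (hvw : Reaches A v w) :
    w ∈ Hset A r := by
  obtain ⟨⟨u, ⟨D, hD, huD⟩, huv⟩, hvG⟩ := hv
  refine ⟨⟨u, ⟨D, hD, huD⟩, huv.trans hcomm hvw⟩, ?_⟩
  rintro ⟨C, hC, hwC⟩
  obtain rfl := hD.eq_of_reaches hC huD hwC (huv.trans hcomm hvw)
  exact hvG ⟨D, hD, hD.1.1.mem_of_reaches hcomm huD huv
    (hvw.trans hcomm (hD.1.1.reaches hcomm hwC huD))⟩

theorem Critical.mem_Hset_of_not_minCrit (hC : Critical A r C) (hnmin : ¬ MinCrit A r C)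
    {v : V} (hv : v ∈ C) : v ∈ Hset A r := by
  obtain ⟨D, hD, u, huD, w, hwC, huw⟩ := exists_minCrit_compLE hcomm hC
  refine ⟨⟨u, ⟨D, hD, huD⟩, huw.trans hcomm (hC.1.reaches hcomm hwC hv)⟩, ?_⟩
  rintro ⟨D', hD', hvD'⟩
  exact hnmin (hC.1.eq_of_mem hcomm hD'.1.1 hv hvD' ▸ hD')

end CriticalComponents

theorem remove_redundant_components_general {V : Type*} [Fintype V] [DecidableEq V]
    {k : ℕ}
    (A : Fin k → Matrix V V ℕ)
    (hcomm : ∀ i j, A i * A j = A j * A i)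
    (r : Fin k → ℝ) :
    (∀ v ∈ Hset A r, ∀ w : V, Reaches A v w → w ∈ Hset A r) ∧
    (∀ C : Finset V, MinCrit A r C →
      ∀ v : V, v ∉ Hset A r → (∃ u ∈ C, Reaches A u v) → v ∈ C) ∧
    (∀ C : Finset V, Critical A r C → ¬ MinCrit A r C → ∀ v ∈ C, v ∈ Hset A r) :=
  ⟨fun _ hv _ hvw => mem_Hset_of_reaches hcomm hv hvw,
    fun _ hC _ hv ⟨_, hu, huv⟩ => hC.mem_of_reaches_of_notMem_Hset hu huv hv,
    fun _ hC hnmin _ hv => hC.mem_Hset_of_not_minCrit hcomm hnmin hv⟩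

/-- Combinatorial content of Proposition 3.4: `H` is hereditary, every minimal critical
component is hereditary in `V \ H`, and every non-minimal critical component is contained
in `H`. -/
theorem remove_redundant_components {V : Type*} [Fintype V] [DecidableEq V] [Nonempty V]
    {k : ℕ} (hk : 1 ≤ k)
    (A : Fin k → Matrix V V ℕ)
    (hcomm : ∀ i j, A i * A j = A j * A i)
    (hrow : ∀ i v, ∃ w, A i v w ≠ 0)
    (hcol : ∀ i v, ∃ w, A i w v ≠ 0)
    (hcover : ∀ v : V, ∃ C : Finset V, IsSCC A C ∧ v ∈ C ∧ NontrivialComp A C)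
    (hirr : ∀ C : Finset V, IsSCC A C → CoordIrreducible A C)
    (r : Fin k → ℝ) (hr : ∀ i, 0 < r i)
    (hrad : ∀ i, specRadN (A i) ≤ Real.exp (r i)) :
    (∀ v ∈ Hset A r, ∀ w : V, Reaches A v w → w ∈ Hset A r) ∧
    (∀ C : Finset V, MinCrit A r C →
      ∀ v : V, v ∉ Hset A r → (∃ u ∈ C, Reaches A u v) → v ∈ C) ∧
    (∀ C : Finset V, Critical A r C → ¬ MinCrit A r C → ∀ v ∈ C, v ∈ Hset A r) :=
  remove_redundant_components_general A hcomm r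
end

section
/- Suppose m₁,m₂,n₁,n₂,p₁,p₂,q₁,q₂ are nonnegative integers and r₁,r₂,s₁,s₂ are positive integers, and suppose the matrices A₁ and A₂ commute. If p₁ > m₁ and p₁ > n₁, then p₂ > m₂ and p₂ > n₂. -/
/-!
Since `p₁` differs from `m₁` and `n₁`, it is a simple eigenvalue of `A₁`, with the explicit
eigenvector `v = (q₁ s₁ + r₁ (p₁ - n₁), s₁ (p₁ - m₁), (p₁ - m₁)(p₁ - n₁))`, whose entries are all
positive. As `A₂` commutes with `A₁`, it preserves this eigenline, so `A₂ v = p₂ v`. The first two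
rows of that equation read `(p₂ - m₂) v₀ = q₂ v₁ + r₂ v₂` and `(p₂ - n₂) v₁ = s₂ v₂`, and both
right-hand sides are positive.
-/

open Matrix

section CommRing

variable {R : Type*} [CommRing R]

theorem upperTriangular_mulVec (m n p q r s : R) (w : Fin 3 → R) :
    !![m, q, r; 0, n, s; 0, 0, p] *ᵥ w =
      ![m * w 0 + q * w 1 + r * w 2, n * w 1 + s * w 2, p * w 2] := by
  ext i
  fin_cases i <;> simp [mulVec, dotProduct, Fin.sum_univ_three]

def lastEigenvector (m n p q r s : R) : Fin 3 → R :=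
  ![q * s + r * (p - n), s * (p - m), (p - m) * (p - n)]

theorem upperTriangular_mulVec_lastEigenvector (m n p q r s : R) :
    !![m, q, r; 0, n, s; 0, 0, p] *ᵥ lastEigenvector m n p q r s =
      p • lastEigenvector m n p q r s := by
  ext i
  fin_cases i <;> simp [lastEigenvector] <;> ring

theorem smul_eq_smul_lastEigenvector {m n p q r s : R} {w : Fin 3 → R}
    (hw : !![m, q, r; 0, n, s; 0, 0, p] *ᵥ w = p • w) :
    ((p - m) * (p - n)) • w = w 2 • lastEigenvector m n p q r s := by
  rw [upperTriangular_mulVec] at hw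
  have h₀ := congrFun hw 0
  have h₁ := congrFun hw 1
  simp only [Fin.isValue, cons_val_zero, cons_val_one, Pi.smul_apply, smul_eq_mul] at h₀ h₁
  ext i
  fin_cases i <;> simp [lastEigenvector]
  · linear_combination -(p - n) * h₀ - q * h₁
  · linear_combination -(p - m) * h₁
  · ring

theorem mulVec_lastEigenvector_of_commute [IsDomain R]
    {m₁ m₂ n₁ n₂ p₁ p₂ q₁ q₂ r₁ r₂ s₁ s₂ : R}
    (hcomm : !![m₁, q₁, r₁; 0, n₁, s₁; 0, 0, p₁] * !![m₂, q₂, r₂; 0, n₂, s₂; 0, 0, p₂] =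
      !![m₂, q₂, r₂; 0, n₂, s₂; 0, 0, p₂] * !![m₁, q₁, r₁; 0, n₁, s₁; 0, 0, p₁])
    (hm : p₁ ≠ m₁) (hn : p₁ ≠ n₁) :
    !![m₂, q₂, r₂; 0, n₂, s₂; 0, 0, p₂] *ᵥ lastEigenvector m₁ n₁ p₁ q₁ r₁ s₁ =
      p₂ • lastEigenvector m₁ n₁ p₁ q₁ r₁ s₁ := by
  set v := lastEigenvector m₁ n₁ p₁ q₁ r₁ s₁
  set w := !![m₂, q₂, r₂; 0, n₂, s₂; 0, 0, p₂] *ᵥ v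
  have hw : !![m₁, q₁, r₁; 0, n₁, s₁; 0, 0, p₁] *ᵥ w = p₁ • w := by
    rw [mulVec_mulVec, hcomm, ← mulVec_mulVec, upperTriangular_mulVec_lastEigenvector, mulVec_smul]
  have hw₂ : w 2 = p₂ * ((p₁ - m₁) * (p₁ - n₁)) := by
    simp [w, v, lastEigenvector]
    ring
  have hd : (p₁ - m₁) * (p₁ - n₁) ≠ 0 := mul_ne_zero (sub_ne_zero.2 hm) (sub_ne_zero.2 hn)
  apply smul_right_injective _ hd
  change _ • w = _
  rw [smul_eq_smul_lastEigenvector hw, hw₂, mul_smul, smul_comm]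

end CommRing

theorem dumbbell_three_components_general (m₁ m₂ n₁ n₂ p₁ p₂ q₁ q₂ r₁ r₂ s₁ s₂ : ℤ)
    (hq₁ : 0 ≤ q₁) (hq₂ : 0 ≤ q₂)
    (hr₁ : 0 < r₁) (hr₂ : 0 < r₂) (hs₁ : 0 < s₁) (hs₂ : 0 < s₂)
    (hcomm : !![m₁, q₁, r₁; 0, n₁, s₁; 0, 0, p₁] * !![m₂, q₂, r₂; 0, n₂, s₂; 0, 0, p₂] =
      !![m₂, q₂, r₂; 0, n₂, s₂; 0, 0, p₂] * !![m₁, q₁, r₁; 0, n₁, s₁; 0, 0, p₁])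
    (h₁ : p₁ > m₁) (h₂ : p₁ > n₁) :
    p₂ > m₂ ∧ p₂ > n₂ := by
  have hv := mulVec_lastEigenvector_of_commute hcomm h₁.ne' h₂.ne'
  have e₀ := congrFun hv 0
  have e₁ := congrFun hv 1
  simp only [upperTriangular_mulVec, lastEigenvector, Fin.isValue, cons_val_zero, cons_val_one,
    cons_val_two, tail_cons, head_cons, Pi.smul_apply, smul_eq_mul] at e₀ e₁
  have hm : 0 < p₁ - m₁ := sub_pos.2 h₁
  have hn : 0 < p₁ - n₁ := sub_pos.2 h₂
  have hv₀ : 0 < q₁ * s₁ + r₁ * (p₁ - n₁) := by positivity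
  have hv₁ : 0 < s₁ * (p₁ - m₁) := by positivity
  constructor
  · have h : (p₂ - m₂) * (q₁ * s₁ + r₁ * (p₁ - n₁)) =
        q₂ * (s₁ * (p₁ - m₁)) + r₂ * ((p₁ - m₁) * (p₁ - n₁)) := by linear_combination -e₀
    exact sub_pos.1 (pos_of_mul_pos_left (h ▸ by positivity) hv₀.le)
  · have h : (p₂ - n₂) * (s₁ * (p₁ - m₁)) = s₂ * ((p₁ - m₁) * (p₁ - n₁)) := by
      linear_combination -e₁
    exact sub_pos.1 (pos_of_mul_pos_left (h ▸ by positivity) hv₁.le)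

/-- Direct 3-vertex form of Theorem 4.2 (Appendix A): if the vertex matrices of a dumbbell
2-graph with three components commute, all off-diagonal bridge entries `r_i, s_i` are
positive, and `p₁` dominates `m₁` and `n₁`, then `p₂` dominates `m₂` and `n₂`. -/
theorem dumbbell_three_components (m₁ m₂ n₁ n₂ p₁ p₂ q₁ q₂ r₁ r₂ s₁ s₂ : ℤ)
    (hm₁ : 0 ≤ m₁) (hm₂ : 0 ≤ m₂) (hn₁ : 0 ≤ n₁) (hn₂ : 0 ≤ n₂)
    (hp₁ : 0 ≤ p₁) (hp₂ : 0 ≤ p₂) (hq₁ : 0 ≤ q₁) (hq₂ : 0 ≤ q₂)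
    (hr₁ : 0 < r₁) (hr₂ : 0 < r₂) (hs₁ : 0 < s₁) (hs₂ : 0 < s₂)
    (hcomm : !![m₁, q₁, r₁; 0, n₁, s₁; 0, 0, p₁] * !![m₂, q₂, r₂; 0, n₂, s₂; 0, 0, p₂] =
      !![m₂, q₂, r₂; 0, n₂, s₂; 0, 0, p₂] * !![m₁, q₁, r₁; 0, n₁, s₁; 0, 0, p₁])
    (h₁ : p₁ > m₁) (h₂ : p₁ > n₁) :
    p₂ > m₂ ∧ p₂ > n₂ :=
  dumbbell_three_components_general m₁ m₂ n₁ n₂ p₁ p₂ q₁ q₂ r₁ r₂ s₁ s₂ hq₁ hq₂ hr₁ hr₂ hs₁ hs₂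
    hcomm h₁ h₂
end

section
/- Suppose m₁,m₂,n₁,n₂,p₁,p₂ are nonnegative integers, q₁,q₂,s₁,s₂ are positive integers, r₁ = r₂ = 0, and the matrices A₁ and A₂ commute. If p₁ > m₁ and p₁ > n₁, then p₂ > m₂ and p₂ > n₂. -/
/-! Commutation of the two matrices amounts to three entry identities,
`q₁ (n₂ - m₂) = q₂ (n₁ - m₁)`, `q₁ s₂ = q₂ s₁` and `s₁ (p₂ - n₂) = s₂ (p₁ - n₁)`.
With `λ = s₂ / s₁ = q₂ / q₁ > 0` they say that `p₂ - n₂ = λ (p₁ - n₁)` and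
`p₂ - m₂ = λ (p₁ - m₁)`, so the signs of these gaps pass from `A₁` to `A₂`. -/

section

variable {R : Type*} [CommRing R] {m₁ m₂ n₁ n₂ p₁ p₂ q₁ q₂ s₁ s₂ : R}

theorem entry_identities_of_commute
    (h : !![m₁, q₁, 0; 0, n₁, s₁; 0, 0, p₁] * !![m₂, q₂, 0; 0, n₂, s₂; 0, 0, p₂] =
      !![m₂, q₂, 0; 0, n₂, s₂; 0, 0, p₂] * !![m₁, q₁, 0; 0, n₁, s₁; 0, 0, p₁]) :
    q₁ * (n₂ - m₂) = q₂ * (n₁ - m₁) ∧ q₁ * s₂ = q₂ * s₁ ∧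
      s₁ * (p₂ - n₂) = s₂ * (p₁ - n₁) := by
  have entry (i j : Fin 3) := congrFun (congrFun h i) j
  have h01 : m₁ * q₂ + q₁ * n₂ = m₂ * q₁ + q₂ * n₁ := by
    simpa [Matrix.mul_apply, Fin.sum_univ_succ] using entry 0 1
  have h02 : q₁ * s₂ = q₂ * s₁ := by
    simpa [Matrix.mul_apply, Fin.sum_univ_succ] using entry 0 2
  have h12 : n₁ * s₂ + s₁ * p₂ = n₂ * s₁ + s₂ * p₁ := by
    simpa [Matrix.mul_apply, Fin.sum_univ_succ] using entry 1 2
  exact ⟨by linear_combination h01, h02, by linear_combination h12⟩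

theorem diag_gap_identity_of_commute
    (h : !![m₁, q₁, 0; 0, n₁, s₁; 0, 0, p₁] * !![m₂, q₂, 0; 0, n₂, s₂; 0, 0, p₂] =
      !![m₂, q₂, 0; 0, n₂, s₂; 0, 0, p₂] * !![m₁, q₁, 0; 0, n₁, s₁; 0, 0, p₁]) :
    s₁ * (p₂ - n₂) = s₂ * (p₁ - n₁) ∧ q₁ * s₁ * (p₂ - m₂) = q₁ * s₂ * (p₁ - m₁) := by
  obtain ⟨hqn, hqs, hsp⟩ := entry_identities_of_commute h
  exact ⟨hsp, by linear_combination q₁ * hsp + s₁ * hqn - (n₁ - m₁) * hqs⟩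

end

theorem pos_of_mul_eq_mul_of_pos {R : Type*} [CommRing R] [LinearOrder R]
    [IsStrictOrderedRing R] {a b x y : R} (ha : 0 < a) (hb : 0 < b) (hy : 0 < y)
    (h : a * x = b * y) : 0 < x :=
  pos_of_mul_pos_right (h ▸ mul_pos hb hy) ha.le

theorem dumbbell_r_zero_general (m₁ m₂ n₁ n₂ p₁ p₂ q₁ q₂ s₁ s₂ : ℤ)
    (hq₁ : 0 < q₁) (hs₁ : 0 < s₁) (hs₂ : 0 < s₂)
    (hcomm : !![m₁, q₁, 0; 0, n₁, s₁; 0, 0, p₁] * !![m₂, q₂, 0; 0, n₂, s₂; 0, 0, p₂] =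
      !![m₂, q₂, 0; 0, n₂, s₂; 0, 0, p₂] * !![m₁, q₁, 0; 0, n₁, s₁; 0, 0, p₁])
    (h₁ : p₁ > m₁) (h₂ : p₁ > n₁) :
    p₂ > m₂ ∧ p₂ > n₂ := by
  obtain ⟨hn, hm⟩ := diag_gap_identity_of_commute hcomm
  constructor
  · exact sub_pos.1 <| pos_of_mul_eq_mul_of_pos (mul_pos hq₁ hs₁) (mul_pos hq₁ hs₂)
      (sub_pos.2 h₁) hm
  · exact sub_pos.1 <| pos_of_mul_eq_mul_of_pos hs₁ hs₂ (sub_pos.2 h₂) hn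

/-- Remark A.2 of the paper: the case `r₁ = r₂ = 0` with all `q_i, s_i` positive. If the
vertex matrices commute and `p₁` dominates `m₁` and `n₁`, then `p₂` dominates `m₂`, `n₂`. -/
theorem dumbbell_r_zero (m₁ m₂ n₁ n₂ p₁ p₂ q₁ q₂ s₁ s₂ : ℤ)
    (hm₁ : 0 ≤ m₁) (hm₂ : 0 ≤ m₂) (hn₁ : 0 ≤ n₁) (hn₂ : 0 ≤ n₂)
    (hp₁ : 0 ≤ p₁) (hp₂ : 0 ≤ p₂)
    (hq₁ : 0 < q₁) (hq₂ : 0 < q₂) (hs₁ : 0 < s₁) (hs₂ : 0 < s₂)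
    (hcomm : !![m₁, q₁, 0; 0, n₁, s₁; 0, 0, p₁] * !![m₂, q₂, 0; 0, n₂, s₂; 0, 0, p₂] =
      !![m₂, q₂, 0; 0, n₂, s₂; 0, 0, p₂] * !![m₁, q₁, 0; 0, n₁, s₁; 0, 0, p₁])
    (h₁ : p₁ > m₁) (h₂ : p₁ > n₁) :
    p₂ > m₂ ∧ p₂ > n₂ :=
  dumbbell_r_zero_general m₁ m₂ n₁ n₂ p₁ p₂ q₁ q₂ s₁ s₂ hq₁ hs₁ hs₂ hcomm h₁ h₂
end

section
/- Suppose m₁,m₂,n₁,n₂,p₁,p₂,q₁,q₂ are nonnegative integers, r₁,r₂ are positive integers, s₁ = s₂ = 0, and the matrices A₁ and A₂ commute. If p₁ > m₁, then p₂ > m₂. -/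
theorem Matrix.upperTriangular_three_commute_corner {R : Type*} [CommRing R]
    (m₁ m₂ n₁ n₂ p₁ p₂ q₁ q₂ r₁ r₂ s₁ s₂ : R)
    (hcomm : !![m₁, q₁, r₁; 0, n₁, s₁; 0, 0, p₁] * !![m₂, q₂, r₂; 0, n₂, s₂; 0, 0, p₂] =
      !![m₂, q₂, r₂; 0, n₂, s₂; 0, 0, p₂] * !![m₁, q₁, r₁; 0, n₁, s₁; 0, 0, p₁]) :
    r₁ * (p₂ - m₂) - r₂ * (p₁ - m₁) = q₂ * s₁ - q₁ * s₂ := by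
  have h := congrFun (congrFun hcomm 0) 2
  simp only [Matrix.mul_apply, Fin.sum_univ_three, Matrix.of_apply, Matrix.cons_val',
    Matrix.cons_val_zero, Matrix.cons_val_one, Matrix.cons_val_two, Matrix.empty_val',
    Matrix.cons_val_fin_one, Matrix.tail_cons, Matrix.vecHead] at h
  linear_combination h

theorem dumbbell_s_zero_general (m₁ m₂ n₁ n₂ p₁ p₂ q₁ q₂ r₁ r₂ : ℤ)
    (hr₁ : 0 < r₁) (hr₂ : 0 < r₂)
    (hcomm : !![m₁, q₁, r₁; 0, n₁, 0; 0, 0, p₁] * !![m₂, q₂, r₂; 0, n₂, 0; 0, 0, p₂] =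
      !![m₂, q₂, r₂; 0, n₂, 0; 0, 0, p₂] * !![m₁, q₁, r₁; 0, n₁, 0; 0, 0, p₁])
    (h₁ : p₁ > m₁) :
    p₂ > m₂ := by
  have hcorner : r₁ * (p₂ - m₂) = r₂ * (p₁ - m₁) := by
    have := Matrix.upperTriangular_three_commute_corner m₁ m₂ n₁ n₂ p₁ p₂ q₁ q₂ r₁ r₂ 0 0 hcomm
    linear_combination this
  have hpos : 0 < r₁ * (p₂ - m₂) := hcorner ▸ mul_pos hr₂ (sub_pos.mpr h₁)
  exact sub_pos.mp (pos_of_mul_pos_right hpos hr₁.le)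

/-- First claim of Remark A.3 of the paper: the case `s₁ = s₂ = 0` with `r₁, r₂` positive.
If the vertex matrices commute and `p₁ > m₁`, then `p₂ > m₂`. -/
theorem dumbbell_s_zero (m₁ m₂ n₁ n₂ p₁ p₂ q₁ q₂ r₁ r₂ : ℤ)
    (hm₁ : 0 ≤ m₁) (hm₂ : 0 ≤ m₂) (hn₁ : 0 ≤ n₁) (hn₂ : 0 ≤ n₂)
    (hp₁ : 0 ≤ p₁) (hp₂ : 0 ≤ p₂) (hq₁ : 0 ≤ q₁) (hq₂ : 0 ≤ q₂)
    (hr₁ : 0 < r₁) (hr₂ : 0 < r₂)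
    (hcomm : !![m₁, q₁, r₁; 0, n₁, 0; 0, 0, p₁] * !![m₂, q₂, r₂; 0, n₂, 0; 0, 0, p₂] =
      !![m₂, q₂, r₂; 0, n₂, 0; 0, 0, p₂] * !![m₁, q₁, r₁; 0, n₁, 0; 0, 0, p₁])
    (h₁ : p₁ > m₁) :
    p₂ > m₂ :=
  dumbbell_s_zero_general m₁ m₂ n₁ n₂ p₁ p₂ q₁ q₂ r₁ r₂ hr₁ hr₂ hcomm h₁
end
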